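/- Let I₁, I₂, I₃ ∈ ℝ and a₁, a₂, a₃, d₁, d₂, d₃ ∈ ℝ with a₁ + a₂ + a₃ = 0. Define H(x) = ((I₂+I₃)/2)x₁² + ((I₁+I₃)/2)x₂² + ((I₁+I₂)/2)x₃², and f₁(x) = a₁x₂x₃ + d₃x₂ + d₁x₃, f₂(x) = a₂x₁x₃ − d₃x₁ + d₂x₃, f₃(x) = a₃x₁x₂ − d₁x₁ − d₂x₂. Let x = (x₁,x₂,x₃) : ℝ → ℝ³ be a differentiable curve satisfying x₁' = (I₂−I₃)x₂x₃ − H(x)·f₁(x), x₂' = (I₃−I₁)x₁x₃ − H(x)·f₂(x), x₃' = (I₁−I₂)x₁x₂ − H(x)·f₃(x). Then the function s ↦ x₁(s)² + x₂(s)² + x₃(s)² is constant. -/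

import Mathlib

/-- The Casimir `C₁ = x₁² + x₂² + x₃²` is preserved along the Jacobi
Hamiltonian flow of the modified rigid-body rotation. -/
theorem stmt_19 (I₁ I₂ I₃ a₁ a₂ a₃ d₁ d₂ d₃ : ℝ) (ha : a₁ + a₂ + a₃ = 0)
    (H : ℝ → ℝ → ℝ → ℝ)
    (hHdef : ∀ x₁ x₂ x₃ : ℝ, H x₁ x₂ x₃
      = ((I₂ + I₃) / 2) * x₁ ^ 2 + ((I₁ + I₃) / 2) * x₂ ^ 2 + ((I₁ + I₂) / 2) * x₃ ^ 2)
    (f₁ f₂ f₃ : ℝ → ℝ → ℝ → ℝ)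
    (hf₁ : ∀ x₁ x₂ x₃ : ℝ, f₁ x₁ x₂ x₃ = a₁ * x₂ * x₃ + d₃ * x₂ + d₁ * x₃)
    (hf₂ : ∀ x₁ x₂ x₃ : ℝ, f₂ x₁ x₂ x₃ = a₂ * x₁ * x₃ - d₃ * x₁ + d₂ * x₃)
    (hf₃ : ∀ x₁ x₂ x₃ : ℝ, f₃ x₁ x₂ x₃ = a₃ * x₁ * x₂ - d₁ * x₁ - d₂ * x₂)
    (x₁ x₂ x₃ : ℝ → ℝ)
    (h₁ : Differentiable ℝ x₁) (h₂ : Differentiable ℝ x₂) (h₃ : Differentiable ℝ x₃)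
    (hx₁ : ∀ s, deriv x₁ s = (I₂ - I₃) * x₂ s * x₃ s
      - H (x₁ s) (x₂ s) (x₃ s) * f₁ (x₁ s) (x₂ s) (x₃ s))
    (hx₂ : ∀ s, deriv x₂ s = (I₃ - I₁) * x₁ s * x₃ s
      - H (x₁ s) (x₂ s) (x₃ s) * f₂ (x₁ s) (x₂ s) (x₃ s))
    (hx₃ : ∀ s, deriv x₃ s = (I₁ - I₂) * x₁ s * x₂ s
      - H (x₁ s) (x₂ s) (x₃ s) * f₃ (x₁ s) (x₂ s) (x₃ s)) :
    ∀ s₁ s₂ : ℝ,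
      x₁ s₁ ^ 2 + x₂ s₁ ^ 2 + x₃ s₁ ^ 2 = x₁ s₂ ^ 2 + x₂ s₂ ^ 2 + x₃ s₂ ^ 2 := by

  have key : ∀ s, deriv (fun t => x₁ t ^ 2 + x₂ t ^ 2 + x₃ t ^ 2) s = 0 := by
    intro s
    have d1 := (h₁ s).hasDerivAt
    have d2 := (h₂ s).hasDerivAt
    have d3 := (h₃ s).hasDerivAt
    have : HasDerivAt (fun t => x₁ t ^ 2 + x₂ t ^ 2 + x₃ t ^ 2)
        (2 * x₁ s * deriv x₁ s + 2 * x₂ s * deriv x₂ s + 2 * x₃ s * deriv x₃ s) s := by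
      have e1 := (d1.fun_pow 2).fun_add (d2.fun_pow 2) |>.fun_add (d3.fun_pow 2)
      refine e1.congr_deriv ?_
      ring
    rw [this.deriv, hx₁, hx₂, hx₃, hHdef, hf₁, hf₂, hf₃]
    have ha3 : a₃ = -a₁ - a₂ := by linarith
    rw [ha3]; ring
  intro s₁ s₂
  have := is_const_of_deriv_eq_zero (f := fun t => x₁ t ^ 2 + x₂ t ^ 2 + x₃ t ^ 2)
    (by fun_prop) key s₁ s₂
  simpa using this
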